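/- Let U be a unitary on H satisfying the SSQW conditions, and let {η₁ˣ, η₂ˣ}_{x∈ℤ} be orthonormal bases of the H_x with U H_x ⊆ ℂη₁^{x−1} ⊕ H_x ⊕ ℂη₂^{x+1} for all x ∈ ℤ. If for some y ∈ ℤ there is an orthonormal basis {ζ₁ʸ, ζ₂ʸ} of H_y with U P_y = |η₁^{y−1}⟩⟨ζ₁ʸ| + |η₂ʸ⟩⟨ζ₂ʸ|, then there exist orthonormal bases {ζ₁ˣ, ζ₂ˣ} of H_x for every x ∈ ℤ such that U = Σ_{x∈ℤ} |η₁^{x−1}⟩⟨ζ₁ˣ| + |η₂ˣ⟩⟨ζ₂ˣ| (equivalently, U ζ₁ˣ = η₁^{x−1} and U ζ₂ˣ = η₂ˣ for all x ∈ ℤ). -/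

import Mathlib

noncomputable section

/-- `H = ⊕_{x∈ℤ} H_x`, the ℓ² direct sum with each `H_x` a copy of `ℂ²`. -/
abbrev H : Type := lp (fun _ : ℤ × Fin 2 => ℂ) 2

/-- The canonical orthonormal basis vector `eᵢˣ` of `H_x` viewed in `H`. -/
def e (x : ℤ) (i : Fin 2) : H := lp.single 2 (x, i) 1

/-- The subspace `H_x` of `H`. -/
def Hx (x : ℤ) : Submodule ℂ H := Submodule.span ℂ {e x 0, e x 1}

/-- The rank-one operator `|u⟩⟨v| : w ↦ ⟨v, w⟩ u`. -/
def ketbra (u v : H) : H →L[ℂ] H := ((innerSL ℂ) v).smulRight u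

/-- The orthogonal projection of `H` onto `H_x`. -/
def P (x : ℤ) : H →L[ℂ] H := ketbra (e x 0) (e x 0) + ketbra (e x 1) (e x 1)

/-- A unitary (linear isometric equivalence) viewed as a continuous linear map. -/
def clm (U : H ≃ₗᵢ[ℂ] H) : H →L[ℂ] H := U.toLinearIsometry.toContinuousLinearMap

/-- `{u, v}` is an orthonormal basis of the two dimensional space `H_x`. -/
def ONBx (x : ℤ) (u v : H) : Prop :=
  u ∈ Hx x ∧ v ∈ Hx x ∧ ‖u‖ = 1 ∧ ‖v‖ = 1 ∧ (inner ℂ u v : ℂ) = 0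

/-- The SSQW conditions: `U H_x ⊆ H_{x-1} ⊕ H_x ⊕ H_{x+1}` and
`rank(P_{x±1} U P_x) ≤ 1` for all `x`. -/
def SSQW (U : H ≃ₗᵢ[ℂ] H) : Prop :=
  (∀ x : ℤ, ∀ ψ ∈ Hx x, U ψ ∈ Hx (x - 1) ⊔ Hx x ⊔ Hx (x + 1)) ∧
  (∀ x : ℤ, LinearMap.rank (((P (x + 1)).comp ((clm U).comp (P x))).toLinearMap) ≤ 1) ∧
  (∀ x : ℤ, LinearMap.rank (((P (x - 1)).comp ((clm U).comp (P x))).toLinearMap) ≤ 1)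

/-!
Call `x` split when `U` maps an orthonormal basis of `H_x` onto `η₁^{x-1}, η₂^x`, i.e. when
`U H_x = span {η₁^{x-1}, η₂^x}`; by hypothesis `y` is split, and splitting propagates in both
directions. If `x` is split, then `η₁^x` and `η₂^{x+1}` are orthogonal to `U H_z` for every
`z ≠ x + 1` (for `z = x` by the above, otherwise by the range condition), so their preimages lie
in `H_{x+1}`. Backwards, the range condition puts `U H_{x-1}` inside
`span {η₁^{x-2}, η₂^{x-1}} ⊕ U H_x` while unitarity makes it orthogonal to `U H_x`, so it equals
the two-dimensional `span {η₁^{x-2}, η₂^{x-1}}`.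
-/

open Submodule
open scoped InnerProductSpace

section InnerProductSpace

variable {𝕜 E : Type*} [RCLike 𝕜] [NormedAddCommGroup E] [InnerProductSpace 𝕜 E]

theorem orthonormal_pair_iff {u v : E} :
    Orthonormal 𝕜 ![u, v] ↔ ‖u‖ = 1 ∧ ‖v‖ = 1 ∧ ⟪u, v⟫_𝕜 = 0 := by
  simp only [orthonormal_vecCons_iff, Fin.forall_fin_one, Matrix.cons_val_fin_one,
    IsEmpty.forall_iff, Orthonormal.of_isEmpty, and_true]
  tauto

theorem finrank_span_pair_of_orthonormal {u v : E} (h : Orthonormal 𝕜 ![u, v]) :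
    Module.finrank 𝕜 (span 𝕜 {u, v}) = 2 := by
  rw [← Matrix.range_cons_cons_empty, finrank_span_eq_card h.linearIndependent,
    Fintype.card_fin]

theorem span_pair_eq_of_orthonormal {u v : E} {W : Submodule 𝕜 E} [FiniteDimensional 𝕜 W]
    (hW : Module.finrank 𝕜 W = 2) (h : Orthonormal 𝕜 ![u, v]) (hu : u ∈ W) (hv : v ∈ W) :
    span 𝕜 {u, v} = W :=
  eq_of_le_of_finrank_eq (span_le.mpr (Set.insert_subset hu (Set.singleton_subset_iff.mpr hv)))
    (by rw [hW, finrank_span_pair_of_orthonormal h])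

theorem le_of_le_sup_of_le_orthogonal {A S K : Submodule 𝕜 E} (hA : A ≤ S ⊔ K) (hAK : A ≤ Kᗮ)
    (hSK : S ≤ Kᗮ) : A ≤ S :=
  calc A ≤ (S ⊔ K) ⊓ Kᗮ := le_inf hA hAK
    _ = S := by rw [sup_inf_assoc_of_le _ hSK, inf_orthogonal_eq_bot, sup_bot_eq]

end InnerProductSpace

theorem inner_e_left (x : ℤ) (i : Fin 2) (f : H) : ⟪e x i, f⟫_ℂ = f (x, i) := by
  simp [e, lp.inner_single_left, RCLike.inner_apply]

theorem inner_e_e (x z : ℤ) (i j : Fin 2) :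
    ⟪e x i, e z j⟫_ℂ = if (z, j) = (x, i) then 1 else 0 := by
  rw [inner_e_left, e, lp.single_apply]
  split_ifs <;> simp_all

theorem orthonormal_e (x : ℤ) : Orthonormal ℂ ![e x 0, e x 1] := by
  rw [orthonormal_iff_ite]
  intro i j
  fin_cases i <;> fin_cases j <;> simp [inner_e_e, -inner_self_eq_norm_sq_to_K]

theorem e_mem_Hx (x : ℤ) (i : Fin 2) : e x i ∈ Hx x := by
  fin_cases i
  · exact subset_span (by simp)
  · exact subset_span (by simp)

theorem finrank_Hx (x : ℤ) : Module.finrank ℂ (Hx x) = 2 :=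
  finrank_span_pair_of_orthonormal (orthonormal_e x)

instance (x : ℤ) : FiniteDimensional ℂ (Hx x) :=
  FiniteDimensional.span_of_finite ℂ (Set.toFinite _)

theorem Hx_isOrtho {x z : ℤ} (hxz : x ≠ z) : Hx x ⟂ Hx z := by
  rw [Hx, Hx, isOrtho_span]
  simp [inner_e_e, Ne.symm hxz]

theorem eq_zero_of_inner_e_eq_zero {f : H} (h : ∀ z i, ⟪e z i, f⟫_ℂ = 0) : f = 0 := by
  ext ⟨z, i⟩
  rw [← inner_e_left, h]
  rfl

theorem mem_Hx_of_inner_e_eq_zero {x : ℤ} {f : H} (h : ∀ z ≠ x, ∀ i, ⟪e z i, f⟫_ℂ = 0) :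
    f ∈ Hx x := by
  have hf : f - (Hx x).starProjection f = 0 := by
    refine eq_zero_of_inner_e_eq_zero fun z i => ?_
    obtain rfl | hz := eq_or_ne z x
    · exact inner_right_of_mem_orthogonal (e_mem_Hx z i) (sub_starProjection_mem_orthogonal f)
    · rw [inner_sub_right, h z hz i,
        (Hx_isOrtho hz).inner_eq (e_mem_Hx z i) (starProjection_apply_mem _ _), sub_zero]
  rw [sub_eq_zero.mp hf]
  exact starProjection_apply_mem _ _

theorem P_apply_of_mem {x : ℤ} {v : H} (hv : v ∈ Hx x) : P x v = v := by
  obtain ⟨a, b, rfl⟩ := mem_span_pair.mp hv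
  simp only [P, ketbra, add_apply, ContinuousLinearMap.smulRight_apply,
    innerSL_apply_apply, inner_add_right, inner_smul_right, inner_e_e]
  norm_num [smul_smul]

theorem onbx_iff {x : ℤ} {u v : H} :
    ONBx x u v ↔ u ∈ Hx x ∧ v ∈ Hx x ∧ Orthonormal ℂ ![u, v] := by
  rw [orthonormal_pair_iff]
  rfl

theorem ONBx.span_eq {x : ℤ} {u v : H} (h : ONBx x u v) : span ℂ {u, v} = Hx x := by
  obtain ⟨hu, hv, ho⟩ := onbx_iff.mp h
  exact span_pair_eq_of_orthonormal (finrank_Hx x) ho hu hv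

section Family

variable {η₁ η₂ : ℤ → H} (hη : ∀ x, ONBx x (η₁ x) (η₂ x))
include hη

theorem inner_fst_snd_eq_zero (x z : ℤ) : ⟪η₁ x, η₂ z⟫_ℂ = 0 := by
  obtain rfl | hxz := eq_or_ne x z
  · exact (hη x).2.2.2.2
  · exact (Hx_isOrtho hxz).inner_eq (hη x).1 (hη z).2.1

theorem inner_snd_fst_eq_zero (x z : ℤ) : ⟪η₂ x, η₁ z⟫_ℂ = 0 :=
  inner_eq_zero_symm.mp (inner_fst_snd_eq_zero hη z x)

theorem inner_fst_fst_eq_zero {x z : ℤ} (hxz : x ≠ z) : ⟪η₁ x, η₁ z⟫_ℂ = 0 :=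
  (Hx_isOrtho hxz).inner_eq (hη x).1 (hη z).1

theorem inner_snd_snd_eq_zero {x z : ℤ} (hxz : x ≠ z) : ⟪η₂ x, η₂ z⟫_ℂ = 0 :=
  (Hx_isOrtho hxz).inner_eq (hη x).2.1 (hη z).2.1

end Family

section Walk

variable (U : H ≃ₗᵢ[ℂ] H) (η₁ η₂ : ℤ → H)

def SplitsAt (x : ℤ) : Prop :=
  ∃ ζ₁ ζ₂ : H, ONBx x ζ₁ ζ₂ ∧ U ζ₁ = η₁ (x - 1) ∧ U ζ₂ = η₂ x

variable {U η₁ η₂}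

theorem SplitsAt.map_Hx_eq {x : ℤ} (h : SplitsAt U η₁ η₂ x) :
    (Hx x).map (U : H →ₗ[ℂ] H) = span ℂ {η₁ (x - 1), η₂ x} := by
  obtain ⟨ζ₁, ζ₂, hζ, h₁, h₂⟩ := h
  rw [← hζ.span_eq, map_span, Set.image_pair]
  simp [h₁, h₂]

theorem splitsAt_of_mem_map (hη : ∀ x, ONBx x (η₁ x) (η₂ x)) {x : ℤ}
    (h₁ : η₁ (x - 1) ∈ (Hx x).map (U : H →ₗ[ℂ] H)) (h₂ : η₂ x ∈ (Hx x).map (U : H →ₗ[ℂ] H)) :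
    SplitsAt U η₁ η₂ x := by
  obtain ⟨ζ₁, hζ₁, hU₁ : U ζ₁ = η₁ (x - 1)⟩ := h₁
  obtain ⟨ζ₂, hζ₂, hU₂ : U ζ₂ = η₂ x⟩ := h₂
  refine ⟨ζ₁, ζ₂, ⟨hζ₁, hζ₂, ?_, ?_, ?_⟩, hU₁, hU₂⟩
  · rw [← U.norm_map, hU₁, (hη _).2.2.1]
  · rw [← U.norm_map, hU₂, (hη _).2.2.2.1]
  · rw [← U.inner_map_map, hU₁, hU₂, inner_fst_snd_eq_zero hη]

theorem mem_map_Hx_of_inner_eq_zero {x : ℤ} {w : H}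
    (h : ∀ z ≠ x, ∀ v ∈ Hx z, ⟪U v, w⟫_ℂ = 0) : w ∈ (Hx x).map (U : H →ₗ[ℂ] H) := by
  refine ⟨U.symm w, mem_Hx_of_inner_e_eq_zero fun z hz i => ?_, U.apply_symm_apply w⟩
  rw [← U.inner_map_eq_flip]
  exact h z hz _ (e_mem_Hx z i)

theorem inner_apply_eq_zero_of_mem_orthogonal
    (hrange : ∀ x : ℤ, ∀ ψ ∈ Hx x,
      U ψ ∈ span ℂ {η₁ (x - 1)} ⊔ Hx x ⊔ span ℂ {η₂ (x + 1)})
    {z : ℤ} {w : H} (h₁ : ⟪η₁ (z - 1), w⟫_ℂ = 0) (hz : w ∈ (Hx z)ᗮ)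
    (h₂ : ⟪η₂ (z + 1), w⟫_ℂ = 0) {v : H} (hv : v ∈ Hx z) : ⟪U v, w⟫_ℂ = 0 := by
  refine inner_right_of_mem_orthogonal (hrange z v hv) ?_
  rw [← inf_orthogonal, ← inf_orthogonal]
  exact ⟨⟨mem_orthogonal_singleton_iff_inner_right.mpr h₁, hz⟩,
    mem_orthogonal_singleton_iff_inner_right.mpr h₂⟩

theorem SplitsAt.succ (hη : ∀ x, ONBx x (η₁ x) (η₂ x))
    (hrange : ∀ x : ℤ, ∀ ψ ∈ Hx x,
      U ψ ∈ span ℂ {η₁ (x - 1)} ⊔ Hx x ⊔ span ℂ {η₂ (x + 1)})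
    {x : ℤ} (h : SplitsAt U η₁ η₂ x) : SplitsAt U η₁ η₂ (x + 1) := by
  have hUx : ∀ w, ⟪η₁ (x - 1), w⟫_ℂ = 0 → ⟪η₂ x, w⟫_ℂ = 0 → ∀ v ∈ Hx x, ⟪U v, w⟫_ℂ = 0 := by
    intro w h₁ h₂ v hv
    have hUv : U v ∈ span ℂ {η₁ (x - 1), η₂ x} := h.map_Hx_eq ▸ mem_map_of_mem hv
    exact (isOrtho_span.mpr (by simp [h₁, h₂])).inner_eq hUv (mem_span_singleton_self w)
  apply splitsAt_of_mem_map hη <;> apply mem_map_Hx_of_inner_eq_zero <;> intro z hz v hv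
  · rw [add_sub_cancel_right]
    obtain rfl | hzx := eq_or_ne z x
    · exact hUx _ (inner_fst_fst_eq_zero hη (by omega)) (inner_snd_fst_eq_zero hη _ _) v hv
    · exact inner_apply_eq_zero_of_mem_orthogonal hrange (inner_fst_fst_eq_zero hη (by omega))
        ((Hx_isOrtho hzx.symm).le (hη x).1) (inner_snd_fst_eq_zero hη _ _) hv
  · obtain rfl | hzx := eq_or_ne z x
    · exact hUx _ (inner_fst_snd_eq_zero hη _ _) (inner_snd_snd_eq_zero hη (by omega)) v hv
    · exact inner_apply_eq_zero_of_mem_orthogonal hrange (inner_fst_snd_eq_zero hη _ _)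
        ((Hx_isOrtho hz.symm).le (hη (x + 1)).2.1) (inner_snd_snd_eq_zero hη (by omega)) hv

theorem SplitsAt.pred (hη : ∀ x, ONBx x (η₁ x) (η₂ x))
    (hrange : ∀ x : ℤ, ∀ ψ ∈ Hx x,
      U ψ ∈ span ℂ {η₁ (x - 1)} ⊔ Hx x ⊔ span ℂ {η₂ (x + 1)})
    {x : ℤ} (h : SplitsAt U η₁ η₂ x) : SplitsAt U η₁ η₂ (x - 1) := by
  set K := span ℂ {η₁ (x - 1), η₂ x} with hK
  set S := span ℂ {η₁ (x - 1 - 1), η₂ (x - 1)} with hS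
  have hSK : S ≤ Kᗮ := (isOrtho_span.mpr (by
    simp [inner_fst_fst_eq_zero hη (by omega : x - 1 - 1 ≠ x - 1), inner_fst_snd_eq_zero hη,
      inner_snd_fst_eq_zero hη, inner_snd_snd_eq_zero hη (by omega : x - 1 ≠ x)])).le
  have hmapK : (Hx (x - 1)).map (U : H →ₗ[ℂ] H) ≤ Kᗮ := by
    rw [hK, ← h.map_Hx_eq]
    exact ((Hx_isOrtho (by omega)).map U.toLinearIsometry).le
  have hmapSK : (Hx (x - 1)).map (U : H →ₗ[ℂ] H) ≤ S ⊔ K := by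
    have hsup : span ℂ {η₁ (x - 1 - 1)} ⊔ span ℂ {η₁ (x - 1), η₂ (x - 1)} ⊔ span ℂ {η₂ x}
        = S ⊔ K := by
      simp only [hS, hK, ← span_union]
      congr 1
      ext
      simp only [Set.mem_union, Set.mem_insert_iff, Set.mem_singleton_iff]
      tauto
    rw [map_le_iff_le_comap, ← hsup, (hη (x - 1)).span_eq]
    intro v hv
    have hUv := hrange (x - 1) v hv
    rw [sub_add_cancel] at hUv
    exact hUv
  have hSo : Orthonormal ℂ ![η₁ (x - 1 - 1), η₂ (x - 1)] :=
    orthonormal_pair_iff.mpr ⟨(hη _).2.2.1, (hη _).2.2.2.1, inner_fst_snd_eq_zero hη _ _⟩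
  have : FiniteDimensional ℂ S := FiniteDimensional.span_of_finite ℂ (Set.toFinite _)
  have heq : (Hx (x - 1)).map (U : H →ₗ[ℂ] H) = S := eq_of_le_of_finrank_eq
    (le_of_le_sup_of_le_orthogonal hmapSK hmapK hSK)
    ((U.toLinearEquiv.finrank_map_eq _).trans (by
      rw [finrank_Hx, finrank_span_pair_of_orthonormal hSo]))
  exact splitsAt_of_mem_map hη (heq ▸ subset_span (by simp)) (heq ▸ subset_span (by simp))

theorem splitsAt_of_comp_P_eq {y : ℤ} {ζ₁ ζ₂ : H} (hζ : ONBx y ζ₁ ζ₂)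
    (hUPy : (clm U).comp (P y) = ketbra (η₁ (y - 1)) ζ₁ + ketbra (η₂ y) ζ₂) :
    SplitsAt U η₁ η₂ y := by
  have hU : ∀ v ∈ Hx y, U v = ⟪ζ₁, v⟫_ℂ • η₁ (y - 1) + ⟪ζ₂, v⟫_ℂ • η₂ y := by
    intro v hv
    simpa [ketbra, clm, P_apply_of_mem hv] using congr($hUPy v)
  obtain ⟨hζ₁, hζ₂, hn₁, hn₂, hζ₁₂⟩ := hζ
  refine ⟨ζ₁, ζ₂, ⟨hζ₁, hζ₂, hn₁, hn₂, hζ₁₂⟩, ?_, ?_⟩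
  · simp [hU ζ₁ hζ₁, hn₁, inner_eq_zero_symm.mp hζ₁₂]
  · simp [hU ζ₂ hζ₂, hn₂, hζ₁₂]

end Walk

theorem exclude_case_one_general (U : H ≃ₗᵢ[ℂ] H) (η₁ η₂ : ℤ → H)
    (hη : ∀ x : ℤ, ONBx x (η₁ x) (η₂ x))
    (hrange : ∀ x : ℤ, ∀ ψ ∈ Hx x,
      U ψ ∈ Submodule.span ℂ {η₁ (x - 1)} ⊔ Hx x ⊔ Submodule.span ℂ {η₂ (x + 1)})
    (y : ℤ) (ζ₁ ζ₂ : H) (hζ : ONBx y ζ₁ ζ₂)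
    (hUPy : (clm U).comp (P y) = ketbra (η₁ (y - 1)) ζ₁ + ketbra (η₂ y) ζ₂) :
    ∃ ζ₁' ζ₂' : ℤ → H, (∀ x : ℤ, ONBx x (ζ₁' x) (ζ₂' x)) ∧
      ∀ x : ℤ, U (ζ₁' x) = η₁ (x - 1) ∧ U (ζ₂' x) = η₂ x := by
  have hsplit : ∀ x, SplitsAt U η₁ η₂ x := fun x =>
    Int.inductionOn' x y (splitsAt_of_comp_P_eq hζ hUPy)
      (fun _ _ h => h.succ hη hrange) (fun _ _ h => h.pred hη hrange)
  choose ζ₁' ζ₂' hONB h₁ h₂ using hsplit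
  exact ⟨ζ₁', ζ₂', hONB, fun x => ⟨h₁ x, h₂ x⟩⟩

/-- If for some `y` we have
`U P_y = |η₁^{y−1}⟩⟨ζ₁ʸ| + |η₂ʸ⟩⟨ζ₂ʸ|`, then there are orthonormal bases
`{ζ₁ˣ, ζ₂ˣ}` of every `H_x` with `U ζ₁ˣ = η₁^{x−1}` and `U ζ₂ˣ = η₂ˣ`,
i.e. `U = Σ_x |η₁^{x−1}⟩⟨ζ₁ˣ| + |η₂ˣ⟩⟨ζ₂ˣ|`. -/
theorem exclude_case_one (U : H ≃ₗᵢ[ℂ] H) (hU : SSQW U) (η₁ η₂ : ℤ → H)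
    (hη : ∀ x : ℤ, ONBx x (η₁ x) (η₂ x))
    (hrange : ∀ x : ℤ, ∀ ψ ∈ Hx x,
      U ψ ∈ Submodule.span ℂ {η₁ (x - 1)} ⊔ Hx x ⊔ Submodule.span ℂ {η₂ (x + 1)})
    (y : ℤ) (ζ₁ ζ₂ : H) (hζ : ONBx y ζ₁ ζ₂)
    (hUPy : (clm U).comp (P y) = ketbra (η₁ (y - 1)) ζ₁ + ketbra (η₂ y) ζ₂) :
    ∃ ζ₁' ζ₂' : ℤ → H, (∀ x : ℤ, ONBx x (ζ₁' x) (ζ₂' x)) ∧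
      ∀ x : ℤ, U (ζ₁' x) = η₁ (x - 1) ∧ U (ζ₂' x) = η₂ x :=
  exclude_case_one_general U η₁ η₂ hη hrange y ζ₁ ζ₂ hζ hUPy
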